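/- For every integer m ≠ 0 there exists δ with 0 < δ < 1/4 such that the function x ↦ |c_m(x)| is monotone on the interval (0, δ). -/

import Mathlib

open Complex in
/-- `f(x,t)` from the paper (principal branch of the complex logarithm). -/
noncomputable def fFun (x t : ℝ) : ℂ :=
  Complex.log (1 - (x : ℂ) ^ 2 / 2 - Complex.I * (x : ℂ) +
      ((x : ℂ) ^ 2 / 2) * Complex.exp (Complex.I * (t : ℂ))) +
  Complex.log (1 - (x : ℂ) ^ 2 / 2 + Complex.I * (x : ℂ) +
      ((x : ℂ) ^ 2 / 2) * Complex.exp (-(Complex.I * (t : ℂ)))) -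
  Complex.log (1 - (x : ℂ) ^ 2 / 2 - Complex.I * (x : ℂ) -
      ((x : ℂ) ^ 2 / 2) * Complex.exp (-(Complex.I * (t : ℂ)))) -
  Complex.log (1 - (x : ℂ) ^ 2 / 2 + Complex.I * (x : ℂ) -
      ((x : ℂ) ^ 2 / 2) * Complex.exp (Complex.I * (t : ℂ)))

/-- `g(x,t)` from the paper (principal branch of the complex logarithm). -/
noncomputable def gFun (x t : ℝ) : ℂ :=
  Complex.I * Complex.log (1 - (x : ℂ) ^ 2 / 2 - Complex.I * (x : ℂ) +
      ((x : ℂ) ^ 2 / 2) * Complex.exp (Complex.I * (t : ℂ))) -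
  Complex.I * Complex.log (1 - (x : ℂ) ^ 2 / 2 + Complex.I * (x : ℂ) +
      ((x : ℂ) ^ 2 / 2) * Complex.exp (-(Complex.I * (t : ℂ)))) +
  Complex.I * Complex.log (1 - (x : ℂ) ^ 2 / 2 - Complex.I * (x : ℂ) -
      ((x : ℂ) ^ 2 / 2) * Complex.exp (-(Complex.I * (t : ℂ)))) -
  Complex.I * Complex.log (1 - (x : ℂ) ^ 2 / 2 + Complex.I * (x : ℂ) -
      ((x : ℂ) ^ 2 / 2) * Complex.exp (Complex.I * (t : ℂ)))

/-- `h(x,t) = f(x,t)/g(x,t)`. -/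
noncomputable def hFun (x t : ℝ) : ℂ := fFun x t / gFun x t

/-- The Fourier coefficients `c_m(x) = (1/2π) ∫_{-π}^{π} h(x,t) e^{-imt} dt`. -/
noncomputable def cCoef (m : ℤ) (x : ℝ) : ℂ :=
  (1 / (2 * Real.pi)) •
    ∫ t in (-Real.pi)..Real.pi,
      hFun x t * Complex.exp (-(Complex.I * (m : ℂ) * (t : ℂ)))



open Complex Metric

namespace Stmt12Aux

/-- The generic factor `1 - z²/2 + e z + s (z²/2) u`. -/
noncomputable def aa (e s z u : ℂ) : ℂ := 1 - z ^ 2 / 2 + e * z + s * (z ^ 2 / 2) * u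

structure Unit3 (e s u : ℂ) : Prop where
  he : ‖e‖ = 1
  hs : ‖s‖ = 1
  hu : ‖u‖ = 1

lemma norm_aa_sub_one_le {e s u : ℂ} (h : Unit3 e s u) (z : ℂ) :
    ‖aa e s z u - 1‖ ≤ ‖z‖ + ‖z‖ ^ 2 := by
  have hrw : aa e s z u - 1 = e * z + (-(z ^ 2 / 2) + s * (z ^ 2 / 2) * u) := by
    unfold aa; ring
  rw [hrw]
  have h1 : ‖e * z + (-(z ^ 2 / 2) + s * (z ^ 2 / 2) * u)‖
      ≤ ‖e * z‖ + (‖-(z ^ 2 / 2)‖ + ‖s * (z ^ 2 / 2) * u‖) :=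
    (norm_add_le _ _).trans (add_le_add_right (norm_add_le _ _) _)
  have h2 : ‖e * z‖ = ‖z‖ := by rw [norm_mul, h.he, one_mul]
  have h3 : ‖-(z ^ 2 / 2)‖ = ‖z‖ ^ 2 / 2 := by
    rw [norm_neg, norm_div]; simp [norm_pow]
  have h4 : ‖s * (z ^ 2 / 2) * u‖ = ‖z‖ ^ 2 / 2 := by
    rw [norm_mul, norm_mul, h.hs, h.hu, one_mul, mul_one, norm_div]; simp [norm_pow]
  rw [h2, h3, h4] at h1
  linarith

lemma norm_aa_sub_one_le' {e s u : ℂ} (h : Unit3 e s u) {z : ℂ} (hz : ‖z‖ ≤ 1 / 8) :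
    ‖aa e s z u - 1‖ ≤ (9 / 8) * ‖z‖ := by
  have h1 := norm_aa_sub_one_le h z
  have h2 : ‖z‖ ^ 2 ≤ (1 / 8) * ‖z‖ := by
    rw [sq]; exact mul_le_mul_of_nonneg_right hz (norm_nonneg z)
  linarith

lemma norm_aa_sub_one_le'' {e s u : ℂ} (h : Unit3 e s u) {z : ℂ} (hz : ‖z‖ ≤ 1 / 8) :
    ‖aa e s z u - 1‖ ≤ 9 / 64 := by
  have := norm_aa_sub_one_le' h hz
  nlinarith [norm_nonneg z]

lemma aa_mem_slitPlane {e s u : ℂ} (h : Unit3 e s u) {z : ℂ} (hz : ‖z‖ ≤ 1 / 8) :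
    aa e s z u ∈ slitPlane := by
  have h1 := norm_aa_sub_one_le'' h hz
  have h2 : |(aa e s z u - 1).re| ≤ 9 / 64 := (Complex.abs_re_le_norm _).trans h1
  have h3 : (aa e s z u).re = 1 + (aa e s z u - 1).re := by simp [Complex.sub_re]
  rw [Complex.mem_slitPlane_iff]
  left
  rw [h3]
  cases' abs_le.mp h2 with hl hr
  linarith

lemma norm_aa_ge {e s u : ℂ} (h : Unit3 e s u) {z : ℂ} (hz : ‖z‖ ≤ 1 / 8) :
    (3 : ℝ) / 4 ≤ ‖aa e s z u‖ := by
  have h1 := norm_aa_sub_one_le'' h hz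
  have h2 : ‖(1 : ℂ)‖ - ‖aa e s z u‖ ≤ ‖1 - aa e s z u‖ := norm_sub_norm_le _ _
  rw [norm_one, norm_sub_rev] at h2
  linarith

lemma norm_log_aa_sub_le {e s u : ℂ} (h : Unit3 e s u) {z : ℂ} (hz : ‖z‖ ≤ 1 / 8) :
    ‖Complex.log (aa e s z u) - (aa e s z u - 1)‖ ≤ 2 * ‖z‖ ^ 2 := by
  set w := aa e s z u - 1 with hw
  have hwn : ‖w‖ ≤ 9 / 64 := norm_aa_sub_one_le'' h hz
  have hlt : ‖w‖ < 1 := lt_of_le_of_lt hwn (by norm_num)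
  have key := Complex.norm_log_one_add_sub_self_le hlt
  have h1 : (1 : ℂ) + w = aa e s z u := by rw [hw]; ring
  rw [h1] at key
  have h2 : ‖w‖ ^ 2 * (1 - ‖w‖)⁻¹ / 2 ≤ ‖w‖ ^ 2 := by
    have hpos : (0:ℝ) < 1 - ‖w‖ := by linarith
    have : (1 - ‖w‖)⁻¹ ≤ 2 := by
      rw [inv_le_comm₀ hpos (by norm_num)]; linarith
    nlinarith [sq_nonneg ‖w‖]
  have h3 : ‖w‖ ^ 2 ≤ ((9 / 8) * ‖z‖) ^ 2 := by
    have := norm_aa_sub_one_le' h hz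
    have h0 : (0:ℝ) ≤ ‖w‖ := norm_nonneg w
    nlinarith
  calc ‖Complex.log (aa e s z u) - w‖ ≤ ‖w‖ ^ 2 * (1 - ‖w‖)⁻¹ / 2 := key
    _ ≤ ‖w‖ ^ 2 := h2
    _ ≤ ((9/8) * ‖z‖) ^ 2 := h3
    _ ≤ 2 * ‖z‖ ^ 2 := by nlinarith [norm_nonneg z]

lemma hasDerivAt_aa (e s u z : ℂ) :
    HasDerivAt (fun w => aa e s w u) (e + z * (s * u - 1)) z := by
  have hfn : (fun w => aa e s w u) = fun w : ℂ => 1 + e * w + w ^ 2 / 2 * (s * u - 1) := by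
    funext w; unfold aa; ring
  rw [hfn]
  have h1 : HasDerivAt (fun w : ℂ => w ^ 2 / 2 * (s * u - 1)) (z * (s * u - 1)) z := by
    have := ((hasDerivAt_pow 2 z).div_const 2).mul_const (s * u - 1)
    exact this.congr_deriv (by push_cast; ring)
  have h2 : HasDerivAt (fun w : ℂ => 1 + e * w) e z := by
    simpa using ((hasDerivAt_id z).const_mul e).const_add 1
  exact h2.add h1

lemma norm_daa_le {e s u : ℂ} (h : Unit3 e s u) {z : ℂ} (hz : ‖z‖ ≤ 1 / 8) :
    ‖e + z * (s * u - 1)‖ ≤ 2 := by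
  have h1 : ‖e + z * (s * u - 1)‖ ≤ ‖e‖ + ‖z‖ * ‖s * u - 1‖ := by
    refine (norm_add_le _ _).trans ?_
    rw [norm_mul]
  have h2 : ‖s * u - 1‖ ≤ 2 := by
    refine (norm_sub_le _ _).trans ?_
    rw [norm_mul, h.hs, h.hu, norm_one]; norm_num
  have h3 : ‖z‖ * ‖s * u - 1‖ ≤ (1/8) * 2 :=
    mul_le_mul hz h2 (norm_nonneg _) (by norm_num)
  rw [h.he] at h1
  linarith

lemma hasDerivAt_log_aa {e s u : ℂ} (h : Unit3 e s u) {z : ℂ} (hz : ‖z‖ ≤ 1 / 8) :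
    HasDerivAt (fun w => Complex.log (aa e s w u)) ((e + z * (s * u - 1)) / aa e s z u) z :=
  (hasDerivAt_aa e s u z).clog (aa_mem_slitPlane h hz)

lemma norm_div_aa_le {e s u : ℂ} (h : Unit3 e s u) {z : ℂ} (hz : ‖z‖ ≤ 1 / 8) :
    ‖(e + z * (s * u - 1)) / aa e s z u‖ ≤ 3 := by
  rw [norm_div]
  have h1 := norm_daa_le h hz
  have h2 := norm_aa_ge h hz
  rw [div_le_iff₀ (by linarith)]
  nlinarith


/-- complex version of `fFun`. -/
noncomputable def Fc (z : ℂ) (t : ℝ) : ℂ :=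
  Complex.log (aa (-I) 1 z (Complex.exp (Complex.I * (t : ℂ)))) +
  Complex.log (aa I 1 z (Complex.exp (-(Complex.I * (t : ℂ))))) -
  Complex.log (aa (-I) (-1) z (Complex.exp (-(Complex.I * (t : ℂ))))) -
  Complex.log (aa I (-1) z (Complex.exp (Complex.I * (t : ℂ))))

/-- complex version of `gFun`. -/
noncomputable def Gc (z : ℂ) (t : ℝ) : ℂ :=
  Complex.I * Complex.log (aa (-I) 1 z (Complex.exp (Complex.I * (t : ℂ)))) -
  Complex.I * Complex.log (aa I 1 z (Complex.exp (-(Complex.I * (t : ℂ))))) +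
  Complex.I * Complex.log (aa (-I) (-1) z (Complex.exp (-(Complex.I * (t : ℂ))))) -
  Complex.I * Complex.log (aa I (-1) z (Complex.exp (Complex.I * (t : ℂ))))

lemma arg1_eq (z : ℂ) (t : ℝ) :
    1 - z ^ 2 / 2 - Complex.I * z + (z ^ 2 / 2) * Complex.exp (Complex.I * (t : ℂ)) =
      aa (-I) 1 z (Complex.exp (Complex.I * (t : ℂ))) := by unfold aa; ring

lemma arg2_eq (z : ℂ) (t : ℝ) :
    1 - z ^ 2 / 2 + Complex.I * z + (z ^ 2 / 2) * Complex.exp (-(Complex.I * (t : ℂ))) =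
      aa I 1 z (Complex.exp (-(Complex.I * (t : ℂ)))) := by unfold aa; ring

lemma arg3_eq (z : ℂ) (t : ℝ) :
    1 - z ^ 2 / 2 - Complex.I * z - (z ^ 2 / 2) * Complex.exp (-(Complex.I * (t : ℂ))) =
      aa (-I) (-1) z (Complex.exp (-(Complex.I * (t : ℂ)))) := by unfold aa; ring

lemma arg4_eq (z : ℂ) (t : ℝ) :
    1 - z ^ 2 / 2 + Complex.I * z - (z ^ 2 / 2) * Complex.exp (Complex.I * (t : ℂ)) =
      aa I (-1) z (Complex.exp (Complex.I * (t : ℂ))) := by unfold aa; ring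

lemma fFun_eq (x t : ℝ) : fFun x t = Fc (x : ℂ) t := by
  unfold fFun Fc
  rw [arg1_eq, arg2_eq, arg3_eq, arg4_eq]

lemma gFun_eq (x t : ℝ) : gFun x t = Gc (x : ℂ) t := by
  unfold gFun Gc
  rw [arg1_eq, arg2_eq, arg3_eq, arg4_eq]

lemma norm_expE (t : ℝ) : ‖Complex.exp (Complex.I * (t : ℂ))‖ = 1 := by
  rw [Complex.norm_exp]
  simp

lemma norm_expE' (t : ℝ) : ‖Complex.exp (-(Complex.I * (t : ℂ)))‖ = 1 := by
  rw [Complex.norm_exp]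
  simp

lemma unit1 (t : ℝ) : Unit3 (-I) 1 (Complex.exp (Complex.I * (t : ℂ))) :=
  ⟨by simp, by simp, norm_expE t⟩
lemma unit2 (t : ℝ) : Unit3 I 1 (Complex.exp (-(Complex.I * (t : ℂ)))) :=
  ⟨by simp, by simp, norm_expE' t⟩
lemma unit3 (t : ℝ) : Unit3 (-I) (-1) (Complex.exp (-(Complex.I * (t : ℂ)))) :=
  ⟨by simp, by simp, norm_expE' t⟩
lemma unit4 (t : ℝ) : Unit3 I (-1) (Complex.exp (Complex.I * (t : ℂ))) :=
  ⟨by simp, by simp, norm_expE t⟩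

lemma norm_Fc_le {z : ℂ} (hz : ‖z‖ ≤ 1 / 8) (t : ℝ) : ‖Fc z t‖ ≤ 10 * ‖z‖ ^ 2 := by
  set E := Complex.exp (Complex.I * (t : ℂ)) with hE
  set E' := Complex.exp (-(Complex.I * (t : ℂ))) with hE'
  set A1 := aa (-I) 1 z E
  set A2 := aa I 1 z E'
  set A3 := aa (-I) (-1) z E'
  set A4 := aa I (-1) z E
  have key : Fc z t = z ^ 2 * (E + E') +
      ((Complex.log A1 - (A1 - 1)) + (Complex.log A2 - (A2 - 1)) -
        (Complex.log A3 - (A3 - 1)) - (Complex.log A4 - (A4 - 1))) := by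
    unfold Fc
    unfold A1 A2 A3 A4
    unfold aa
    ring
  rw [key]
  have hR1 := norm_log_aa_sub_le (unit1 t) hz
  have hR2 := norm_log_aa_sub_le (unit2 t) hz
  have hR3 := norm_log_aa_sub_le (unit3 t) hz
  have hR4 := norm_log_aa_sub_le (unit4 t) hz
  have hEE : ‖z ^ 2 * (E + E')‖ ≤ 2 * ‖z‖ ^ 2 := by
    rw [norm_mul, norm_pow]
    have : ‖E + E'‖ ≤ 2 := by
      refine (norm_add_le _ _).trans ?_
      rw [hE, hE', norm_expE, norm_expE']; norm_num
    nlinarith [norm_nonneg z, sq_nonneg ‖z‖]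
  have hsum : ‖(Complex.log A1 - (A1 - 1)) + (Complex.log A2 - (A2 - 1)) -
      (Complex.log A3 - (A3 - 1)) - (Complex.log A4 - (A4 - 1))‖ ≤
      ‖Complex.log A1 - (A1 - 1)‖ + ‖Complex.log A2 - (A2 - 1)‖ +
      ‖Complex.log A3 - (A3 - 1)‖ + ‖Complex.log A4 - (A4 - 1)‖ := by
    refine le_trans (norm_sub_le _ _) ?_
    refine add_le_add_left ?_ _
    refine le_trans (norm_sub_le _ _) ?_
    exact add_le_add_left (norm_add_le _ _) _
  refine (norm_add_le _ _).trans ?_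
  linarith

lemma norm_Gc_sub_le {z : ℂ} (hz : ‖z‖ ≤ 1 / 8) (t : ℝ) :
    ‖Gc z t - 4 * z‖ ≤ 10 * ‖z‖ ^ 2 := by
  set E := Complex.exp (Complex.I * (t : ℂ)) with hE
  set E' := Complex.exp (-(Complex.I * (t : ℂ))) with hE'
  set A1 := aa (-I) 1 z E
  set A2 := aa I 1 z E'
  set A3 := aa (-I) (-1) z E'
  set A4 := aa I (-1) z E
  have hI : (Complex.I : ℂ) * Complex.I = -1 := Complex.I_mul_I
  have key : Gc z t - 4 * z = Complex.I * (z ^ 2 * (E - E')) +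
      Complex.I * ((Complex.log A1 - (A1 - 1)) - (Complex.log A2 - (A2 - 1)) +
        (Complex.log A3 - (A3 - 1)) - (Complex.log A4 - (A4 - 1))) := by
    unfold Gc
    unfold A1 A2 A3 A4
    unfold aa
    linear_combination (-4 * z) * hI
  rw [key]
  have hR1 := norm_log_aa_sub_le (unit1 t) hz
  have hR2 := norm_log_aa_sub_le (unit2 t) hz
  have hR3 := norm_log_aa_sub_le (unit3 t) hz
  have hR4 := norm_log_aa_sub_le (unit4 t) hz
  have hEE : ‖Complex.I * (z ^ 2 * (E - E'))‖ ≤ 2 * ‖z‖ ^ 2 := by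
    rw [norm_mul, Complex.norm_I, one_mul, norm_mul, norm_pow]
    have : ‖E - E'‖ ≤ 2 := by
      refine (norm_sub_le _ _).trans ?_
      rw [hE, hE', norm_expE, norm_expE']; norm_num
    nlinarith [norm_nonneg z, sq_nonneg ‖z‖]
  have hRR : ‖Complex.I * ((Complex.log A1 - (A1 - 1)) - (Complex.log A2 - (A2 - 1)) +
      (Complex.log A3 - (A3 - 1)) - (Complex.log A4 - (A4 - 1)))‖ ≤ 8 * ‖z‖ ^ 2 := by
    rw [norm_mul, Complex.norm_I, one_mul]
    have h1 : ‖(Complex.log A1 - (A1 - 1)) - (Complex.log A2 - (A2 - 1)) +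
        (Complex.log A3 - (A3 - 1)) - (Complex.log A4 - (A4 - 1))‖ ≤
        ‖Complex.log A1 - (A1 - 1)‖ + ‖Complex.log A2 - (A2 - 1)‖ +
        ‖Complex.log A3 - (A3 - 1)‖ + ‖Complex.log A4 - (A4 - 1)‖ := by
      refine le_trans (norm_sub_le _ _) ?_
      refine add_le_add_left ?_ _
      refine le_trans (norm_add_le _ _) ?_
      refine add_le_add_left ?_ _
      exact norm_sub_le _ _
    linarith
  exact (norm_add_le _ _).trans (by linarith)

lemma norm_Gc_ge {z : ℂ} (hz : ‖z‖ ≤ 1 / 8) (t : ℝ) : 2 * ‖z‖ ≤ ‖Gc z t‖ := by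
  have h1 := norm_Gc_sub_le hz t
  have h2 : ‖(4 : ℂ) * z‖ - ‖Gc z t‖ ≤ ‖4 * z - Gc z t‖ := norm_sub_norm_le _ _
  rw [norm_sub_rev] at h2
  have h3 : ‖(4:ℂ) * z‖ = 4 * ‖z‖ := by rw [norm_mul]; norm_num
  nlinarith [norm_nonneg z]

lemma norm_Gc_le {z : ℂ} (hz : ‖z‖ ≤ 1 / 8) (t : ℝ) : ‖Gc z t‖ ≤ 6 * ‖z‖ := by
  have h1 := norm_Gc_sub_le hz t
  have h2 : ‖Gc z t‖ - ‖(4:ℂ) * z‖ ≤ ‖Gc z t - 4 * z‖ := norm_sub_norm_le _ _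
  have h3 : ‖(4:ℂ) * z‖ = 4 * ‖z‖ := by rw [norm_mul]; norm_num
  nlinarith [norm_nonneg z]

lemma Gc_ne_zero {z : ℂ} (hz : ‖z‖ ≤ 1 / 8) (hz0 : z ≠ 0) (t : ℝ) : Gc z t ≠ 0 := by
  have h1 := norm_Gc_ge hz t
  have h2 : 0 < ‖z‖ := norm_pos_iff.mpr hz0
  intro h
  rw [h, norm_zero] at h1
  linarith

/-- derivative of `Fc` in `z`. -/
noncomputable def Fd (z : ℂ) (t : ℝ) : ℂ :=
  (-I + z * (1 * Complex.exp (Complex.I * (t : ℂ)) - 1)) / aa (-I) 1 z (Complex.exp (Complex.I * (t : ℂ))) +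
  (I + z * (1 * Complex.exp (-(Complex.I * (t : ℂ))) - 1)) / aa I 1 z (Complex.exp (-(Complex.I * (t : ℂ)))) -
  (-I + z * (-1 * Complex.exp (-(Complex.I * (t : ℂ))) - 1)) / aa (-I) (-1) z (Complex.exp (-(Complex.I * (t : ℂ)))) -
  (I + z * (-1 * Complex.exp (Complex.I * (t : ℂ)) - 1)) / aa I (-1) z (Complex.exp (Complex.I * (t : ℂ)))

/-- derivative of `Gc` in `z`. -/
noncomputable def Gd (z : ℂ) (t : ℝ) : ℂ :=
  Complex.I * ((-I + z * (1 * Complex.exp (Complex.I * (t : ℂ)) - 1)) / aa (-I) 1 z (Complex.exp (Complex.I * (t : ℂ)))) -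
  Complex.I * ((I + z * (1 * Complex.exp (-(Complex.I * (t : ℂ))) - 1)) / aa I 1 z (Complex.exp (-(Complex.I * (t : ℂ))))) +
  Complex.I * ((-I + z * (-1 * Complex.exp (-(Complex.I * (t : ℂ))) - 1)) / aa (-I) (-1) z (Complex.exp (-(Complex.I * (t : ℂ))))) -
  Complex.I * ((I + z * (-1 * Complex.exp (Complex.I * (t : ℂ)) - 1)) / aa I (-1) z (Complex.exp (Complex.I * (t : ℂ))))

lemma hasDerivAt_Fc {z : ℂ} (hz : ‖z‖ ≤ 1 / 8) (t : ℝ) :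
    HasDerivAt (fun w => Fc w t) (Fd z t) z := by
  unfold Fc Fd
  exact (((hasDerivAt_log_aa (unit1 t) hz).add (hasDerivAt_log_aa (unit2 t) hz)).sub
    (hasDerivAt_log_aa (unit3 t) hz)).sub (hasDerivAt_log_aa (unit4 t) hz)

lemma hasDerivAt_Gc {z : ℂ} (hz : ‖z‖ ≤ 1 / 8) (t : ℝ) :
    HasDerivAt (fun w => Gc w t) (Gd z t) z := by
  unfold Gc Gd
  exact ((((hasDerivAt_log_aa (unit1 t) hz).const_mul Complex.I).sub
    ((hasDerivAt_log_aa (unit2 t) hz).const_mul Complex.I)).add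
    ((hasDerivAt_log_aa (unit3 t) hz).const_mul Complex.I)).sub
    ((hasDerivAt_log_aa (unit4 t) hz).const_mul Complex.I)

lemma norm_Fd_le {z : ℂ} (hz : ‖z‖ ≤ 1 / 8) (t : ℝ) : ‖Fd z t‖ ≤ 12 := by
  unfold Fd
  have h1 := norm_div_aa_le (unit1 t) hz
  have h2 := norm_div_aa_le (unit2 t) hz
  have h3 := norm_div_aa_le (unit3 t) hz
  have h4 := norm_div_aa_le (unit4 t) hz
  refine le_trans (norm_sub_le _ _) ?_
  refine le_trans (add_le_add_left (norm_sub_le _ _) _) ?_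
  refine le_trans (add_le_add_left (add_le_add_left (norm_add_le _ _) _) _) ?_
  linarith

lemma norm_Gd_le {z : ℂ} (hz : ‖z‖ ≤ 1 / 8) (t : ℝ) : ‖Gd z t‖ ≤ 12 := by
  unfold Gd
  have h1 := norm_div_aa_le (unit1 t) hz
  have h2 := norm_div_aa_le (unit2 t) hz
  have h3 := norm_div_aa_le (unit3 t) hz
  have h4 := norm_div_aa_le (unit4 t) hz
  have e1 : ∀ w : ℂ, ‖Complex.I * w‖ = ‖w‖ := by
    intro w; rw [norm_mul, Complex.norm_I, one_mul]
  refine le_trans (norm_sub_le _ _) ?_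
  refine le_trans (add_le_add_left (norm_add_le _ _) _) ?_
  refine le_trans (add_le_add_left (add_le_add_left (norm_sub_le _ _) _) _) ?_
  rw [e1, e1, e1, e1]
  linarith

/-- the integrand. -/
noncomputable def P (m : ℤ) (z : ℂ) (t : ℝ) : ℂ :=
  Fc z t / Gc z t * Complex.exp (-(Complex.I * (m : ℂ) * (t : ℂ)))

/-- derivative of the integrand in `z`. -/
noncomputable def Pd (m : ℤ) (z : ℂ) (t : ℝ) : ℂ :=
  ((Fd z t * Gc z t - Fc z t * Gd z t) / Gc z t ^ 2) *
    Complex.exp (-(Complex.I * (m : ℂ) * (t : ℂ)))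

lemma aa_zero (e s u : ℂ) : aa e s 0 u = 1 := by unfold aa; ring

lemma Fc_zero (t : ℝ) : Fc 0 t = 0 := by
  unfold Fc; rw [aa_zero, aa_zero, aa_zero, aa_zero, Complex.log_one]; ring

lemma Gc_zero (t : ℝ) : Gc 0 t = 0 := by
  unfold Gc; rw [aa_zero, aa_zero, aa_zero, aa_zero, Complex.log_one]; ring

lemma norm_exp_unit (m : ℤ) (t : ℝ) : ‖Complex.exp (-(Complex.I * (m : ℂ) * (t : ℂ)))‖ = 1 := by
  rw [Complex.norm_exp]
  simp

lemma hasDerivAt_P {z : ℂ} (hz : ‖z‖ ≤ 1 / 8) (hz0 : z ≠ 0) (m : ℤ) (t : ℝ) :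
    HasDerivAt (fun w => P m w t) (Pd m z t) z := by
  unfold P Pd
  exact ((hasDerivAt_Fc hz t).div (hasDerivAt_Gc hz t) (Gc_ne_zero hz hz0 t)).mul_const _

lemma norm_P_le {z : ℂ} (hz : ‖z‖ ≤ 1 / 8) (m : ℤ) (t : ℝ) : ‖P m z t‖ ≤ 5 * ‖z‖ := by
  unfold P
  rw [norm_mul, norm_exp_unit, mul_one, norm_div]
  rcases eq_or_ne z 0 with rfl | hz0
  · rw [Fc_zero]; simp
  · have h1 := norm_Fc_le hz t
    have h2 := norm_Gc_ge hz t
    have hzpos : 0 < ‖z‖ := norm_pos_iff.mpr hz0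
    rw [div_le_iff₀ (by linarith)]
    nlinarith

lemma norm_Pd_le {z : ℂ} (hz : ‖z‖ ≤ 1 / 8) (hz0 : z ≠ 0) (m : ℤ) (t : ℝ) :
    ‖Pd m z t‖ ≤ 22 / ‖z‖ := by
  unfold Pd
  rw [norm_mul, norm_exp_unit, mul_one, norm_div, norm_pow]
  have hzpos : 0 < ‖z‖ := norm_pos_iff.mpr hz0
  have hnum : ‖Fd z t * Gc z t - Fc z t * Gd z t‖ ≤ 88 * ‖z‖ := by
    refine (norm_sub_le _ _).trans ?_
    rw [norm_mul, norm_mul]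
    have h1 := norm_Fd_le hz t
    have h2 := norm_Gc_le hz t
    have h3 := norm_Fc_le hz t
    have h4 := norm_Gd_le hz t
    have h5 : ‖Fd z t‖ * ‖Gc z t‖ ≤ 12 * (6 * ‖z‖) :=
      mul_le_mul h1 h2 (norm_nonneg _) (by norm_num)
    have h6 : ‖Fc z t‖ * ‖Gd z t‖ ≤ 10 * ‖z‖ ^ 2 * 12 :=
      mul_le_mul h3 h4 (norm_nonneg _) (by positivity)
    have h7 : 10 * ‖z‖ ^ 2 * 12 ≤ 120 * ((1/8) * ‖z‖) := by nlinarith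
    linarith
  have hden : 4 * ‖z‖ ^ 2 ≤ ‖Gc z t‖ ^ 2 := by
    have := norm_Gc_ge hz t
    nlinarith [norm_nonneg (Gc z t)]
  have hdenpos : 0 < ‖Gc z t‖ ^ 2 := by nlinarith
  rw [div_le_div_iff₀ hdenpos hzpos]
  calc ‖Fd z t * Gc z t - Fc z t * Gd z t‖ * ‖z‖ ≤ 88 * ‖z‖ * ‖z‖ :=
        mul_le_mul_of_nonneg_right hnum (norm_nonneg _)
    _ = 22 * (4 * ‖z‖ ^ 2) := by ring
    _ ≤ 22 * ‖Gc z t‖ ^ 2 := by linarith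

lemma continuous_aa_t (e s z : ℂ) (c : ℂ) :
    Continuous fun t : ℝ => aa e s z (Complex.exp (c * (t : ℂ))) := by
  unfold aa
  fun_prop

lemma continuous_log_aa_t {e s : ℂ} {z : ℂ} (hz : ‖z‖ ≤ 1 / 8)
    (hunit : ∀ t : ℝ, Unit3 e s (Complex.exp (Complex.I * (t : ℂ)))) :
    Continuous fun t : ℝ => Complex.log (aa e s z (Complex.exp (Complex.I * (t : ℂ)))) := by
  rw [continuous_iff_continuousAt]
  intro t
  exact ContinuousAt.clog ((continuous_aa_t e s z Complex.I).continuousAt)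
    (aa_mem_slitPlane (hunit t) hz)

lemma continuous_log_aa_t' {e s : ℂ} {z : ℂ} (hz : ‖z‖ ≤ 1 / 8)
    (hunit : ∀ t : ℝ, Unit3 e s (Complex.exp (-(Complex.I * (t : ℂ))))) :
    Continuous fun t : ℝ => Complex.log (aa e s z (Complex.exp (-(Complex.I * (t : ℂ))))) := by
  rw [continuous_iff_continuousAt]
  intro t
  have hc : Continuous fun t : ℝ => aa e s z (Complex.exp (-(Complex.I * (t : ℂ)))) := by
    unfold aa; fun_prop
  exact ContinuousAt.clog hc.continuousAt (aa_mem_slitPlane (hunit t) hz)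

lemma continuous_Fc_t {z : ℂ} (hz : ‖z‖ ≤ 1 / 8) : Continuous fun t : ℝ => Fc z t := by
  unfold Fc
  exact (((continuous_log_aa_t hz unit1).add (continuous_log_aa_t' hz unit2)).sub
    (continuous_log_aa_t' hz unit3)).sub (continuous_log_aa_t hz unit4)

lemma continuous_Gc_t {z : ℂ} (hz : ‖z‖ ≤ 1 / 8) : Continuous fun t : ℝ => Gc z t := by
  unfold Gc
  exact (((continuous_const.mul (continuous_log_aa_t hz unit1)).sub
    (continuous_const.mul (continuous_log_aa_t' hz unit2))).add
    (continuous_const.mul (continuous_log_aa_t' hz unit3))).sub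
    (continuous_const.mul (continuous_log_aa_t hz unit4))

lemma continuous_exp_m (m : ℤ) : Continuous fun t : ℝ => Complex.exp (-(Complex.I * (m : ℂ) * (t : ℂ))) := by
  fun_prop

lemma continuous_P_t {z : ℂ} (hz : ‖z‖ ≤ 1 / 8) (hz0 : z ≠ 0) (m : ℤ) :
    Continuous fun t : ℝ => P m z t := by
  unfold P
  exact (((continuous_Fc_t hz).div (continuous_Gc_t hz))
    (fun t => Gc_ne_zero hz hz0 t)).mul (continuous_exp_m m)

lemma measurable_log_aa_t (e s z c : ℂ) :
    Measurable fun t : ℝ => Complex.log (aa e s z (Complex.exp (c * (t : ℂ)))) :=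
  Complex.measurable_log.comp (continuous_aa_t e s z c).measurable

lemma measurable_log_aa_t' (e s z c : ℂ) :
    Measurable fun t : ℝ => Complex.log (aa e s z (Complex.exp (-(c * (t : ℂ))))) :=
  Complex.measurable_log.comp (by unfold aa; fun_prop : Continuous fun t : ℝ =>
    aa e s z (Complex.exp (-(c * (t : ℂ))))).measurable

lemma measurable_Fc_t (z : ℂ) : Measurable fun t : ℝ => Fc z t := by
  unfold Fc
  exact (((measurable_log_aa_t _ _ _ _).add (measurable_log_aa_t' _ _ _ _)).sub
    (measurable_log_aa_t' _ _ _ _)).sub (measurable_log_aa_t _ _ _ _)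

lemma measurable_Gc_t (z : ℂ) : Measurable fun t : ℝ => Gc z t := by
  unfold Gc
  exact (((measurable_const.mul (measurable_log_aa_t _ _ _ _)).sub
    (measurable_const.mul (measurable_log_aa_t' _ _ _ _))).add
    (measurable_const.mul (measurable_log_aa_t' _ _ _ _))).sub
    (measurable_const.mul (measurable_log_aa_t _ _ _ _))

lemma measurable_P_t (z : ℂ) (m : ℤ) :
    Measurable fun t : ℝ => P m z t := by
  unfold P
  exact ((measurable_Fc_t z).div (measurable_Gc_t z)).mul
    (continuous_exp_m m).measurable

lemma measurable_Fd_t (z : ℂ) : Measurable fun t : ℝ => Fd z t := by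
  unfold Fd
  have haux : ∀ (e s c : ℂ), Measurable fun t : ℝ =>
      (e + z * (s * Complex.exp (c * (t : ℂ)) - 1)) / aa e s z (Complex.exp (c * (t : ℂ))) := by
    intro e s c
    exact (by fun_prop : Measurable fun t : ℝ =>
        (e + z * (s * Complex.exp (c * (t : ℂ)) - 1))).div
      ((continuous_aa_t e s z c).measurable)
  have haux' : ∀ (e s c : ℂ), Measurable fun t : ℝ =>
      (e + z * (s * Complex.exp (-(c * (t : ℂ))) - 1)) / aa e s z (Complex.exp (-(c * (t : ℂ)))) := by
    intro e s c
    exact (by fun_prop : Measurable fun t : ℝ =>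
        (e + z * (s * Complex.exp (-(c * (t : ℂ))) - 1))).div
      ((by unfold aa; fun_prop : Continuous fun t : ℝ =>
        aa e s z (Complex.exp (-(c * (t : ℂ))))).measurable)
  exact (((haux _ _ _).add (haux' _ _ _)).sub (haux' _ _ _)).sub (haux _ _ _)

lemma measurable_Gd_t (z : ℂ) : Measurable fun t : ℝ => Gd z t := by
  unfold Gd
  have haux : ∀ (e s c : ℂ), Measurable fun t : ℝ =>
      (e + z * (s * Complex.exp (c * (t : ℂ)) - 1)) / aa e s z (Complex.exp (c * (t : ℂ))) := by
    intro e s c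
    exact (by fun_prop : Measurable fun t : ℝ =>
        (e + z * (s * Complex.exp (c * (t : ℂ)) - 1))).div
      ((continuous_aa_t e s z c).measurable)
  have haux' : ∀ (e s c : ℂ), Measurable fun t : ℝ =>
      (e + z * (s * Complex.exp (-(c * (t : ℂ))) - 1)) / aa e s z (Complex.exp (-(c * (t : ℂ)))) := by
    intro e s c
    exact (by fun_prop : Measurable fun t : ℝ =>
        (e + z * (s * Complex.exp (-(c * (t : ℂ))) - 1))).div
      ((by unfold aa; fun_prop : Continuous fun t : ℝ =>
        aa e s z (Complex.exp (-(c * (t : ℂ))))).measurable)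
  exact (((measurable_const.mul (haux _ _ _)).sub (measurable_const.mul (haux' _ _ _))).add
    (measurable_const.mul (haux' _ _ _))).sub (measurable_const.mul (haux _ _ _))

lemma measurable_Pd_t (z : ℂ) (m : ℤ) : Measurable fun t : ℝ => Pd m z t := by
  unfold Pd
  exact ((((measurable_Fd_t z).mul (measurable_Gc_t z)).sub
    ((measurable_Fc_t z).mul (measurable_Gd_t z))).div ((measurable_Gc_t z).pow_const 2)).mul
    (continuous_exp_m m).measurable

/-- the parametrized integral. -/
noncomputable def HH (m : ℤ) (z : ℂ) : ℂ := ∫ t in (-Real.pi)..Real.pi, P m z t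

lemma norm_HH_le {z : ℂ} (hz : ‖z‖ ≤ 1 / 8) (m : ℤ) :
    ‖HH m z‖ ≤ 5 * ‖z‖ * (2 * Real.pi) := by
  unfold HH
  have h := intervalIntegral.norm_integral_le_of_norm_le_const
    (C := 5 * ‖z‖) (f := fun t => P m z t) (a := -Real.pi) (b := Real.pi)
    (fun t _ => norm_P_le hz m t)
  have : |Real.pi - -Real.pi| = 2 * Real.pi := by
    rw [_root_.abs_of_nonneg (by linarith [Real.pi_pos] : (0:ℝ) ≤ Real.pi - -Real.pi)]; ring
  rw [this] at h
  exact h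

lemma HH_zero (m : ℤ) : HH m 0 = 0 := by
  have h := norm_HH_le (z := 0) (by simp) m
  simpa using norm_le_zero_iff.mp (by simpa using h)

lemma differentiableAt_HH (m : ℤ) {z₀ : ℂ} (hz₀ : ‖z₀‖ < 1 / 8) (hne : z₀ ≠ 0) :
    DifferentiableAt ℂ (HH m) z₀ := by
  have hz₀pos : 0 < ‖z₀‖ := norm_pos_iff.mpr hne
  set ε : ℝ := min (‖z₀‖ / 2) ((1 / 8 - ‖z₀‖) / 2) with hε
  have hεpos : 0 < ε := lt_min (by linarith) (by linarith)
  have hball : ∀ z ∈ ball z₀ ε, ‖z₀‖ / 2 ≤ ‖z‖ ∧ ‖z‖ ≤ 1 / 8 := by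
    intro z hz
    rw [mem_ball, dist_eq_norm] at hz
    have h1 : ‖z - z₀‖ < ‖z₀‖ / 2 := lt_of_lt_of_le hz (min_le_left _ _)
    have h2 : ‖z - z₀‖ < (1 / 8 - ‖z₀‖) / 2 := lt_of_lt_of_le hz (min_le_right _ _)
    have h3 : ‖z₀‖ - ‖z‖ ≤ ‖z - z₀‖ := by
      rw [norm_sub_rev]; exact norm_sub_norm_le _ _
    have h4 : ‖z‖ - ‖z₀‖ ≤ ‖z - z₀‖ := norm_sub_norm_le _ _
    constructor <;> linarith
  have key := intervalIntegral.hasDerivAt_integral_of_dominated_loc_of_deriv_le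
    (F := fun z t => P m z t) (F' := fun z t => Pd m z t) (x₀ := z₀)
    (a := -Real.pi) (b := Real.pi) (bound := fun _ => 44 / ‖z₀‖) (s := ball z₀ ε) (μ := MeasureTheory.volume) (ball_mem_nhds z₀ hεpos)
    ?_ ?_ ?_ ?_ ?_ ?_
  · exact key.2.differentiableAt
  · filter_upwards with z
    exact ((measurable_P_t z m).aestronglyMeasurable)
  · exact ((continuous_P_t (le_of_lt hz₀) hne m).intervalIntegrable _ _)
  · exact (measurable_Pd_t z₀ m).aestronglyMeasurable
  · filter_upwards with t _ z hz
    obtain ⟨hlo, hhi⟩ := hball z hz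
    have hz0 : z ≠ 0 := by
      intro h; rw [h, norm_zero] at hlo; linarith
    have h1 := norm_Pd_le hhi hz0 m t
    have h2 : 22 / ‖z‖ ≤ 44 / ‖z₀‖ := by
      rw [div_le_div_iff₀ (by linarith [norm_pos_iff.mpr hz0]) hz₀pos]
      have : 0 < ‖z‖ := norm_pos_iff.mpr hz0
      nlinarith
    linarith
  · exact intervalIntegrable_const
  · filter_upwards with t _ z hz
    obtain ⟨hlo, hhi⟩ := hball z hz
    have hz0 : z ≠ 0 := by
      intro h; rw [h, norm_zero] at hlo; linarith
    exact hasDerivAt_P hhi hz0 m t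

lemma continuousAt_HH_zero (m : ℤ) : ContinuousAt (HH m) 0 := by
  rw [ContinuousAt, HH_zero]
  have h : Filter.Tendsto (fun z : ℂ => 5 * ‖z‖ * (2 * Real.pi)) (nhds 0) (nhds 0) := by
    have : Filter.Tendsto (fun z : ℂ => ‖z‖) (nhds 0) (nhds 0) := by
      simpa using (continuous_norm.tendsto (0 : ℂ))
    have h2 := (this.const_mul (5 : ℝ)).mul_const (2 * Real.pi)
    simpa using h2
  apply squeeze_zero_norm' _ h
  filter_upwards [Metric.ball_mem_nhds (0 : ℂ) (by norm_num : (0:ℝ) < 1/8)] with z hz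
  exact norm_HH_le (le_of_lt (by simpa [mem_ball, dist_eq_norm] using hz)) m

lemma analyticOnNhd_HH (m : ℤ) : AnalyticOnNhd ℂ (HH m) (ball (0 : ℂ) (1 / 8)) := by
  have hdiff : DifferentiableOn ℂ (HH m) (ball (0 : ℂ) (1 / 8)) := by
    rw [← Complex.differentiableOn_compl_singleton_and_continuousAt_iff
      (Metric.ball_mem_nhds (0 : ℂ) (by norm_num : (0:ℝ) < 1/8))]
    constructor
    · intro z hz
      obtain ⟨hz1, hz2⟩ := hz
      rw [mem_ball, dist_eq_norm, sub_zero] at hz1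
      have hz0 : z ≠ 0 := by simpa using hz2
      exact (differentiableAt_HH m hz1 hz0).differentiableWithinAt
    · exact continuousAt_HH_zero m
  exact hdiff.analyticOnNhd isOpen_ball

/-- the squared modulus along the real axis. -/
noncomputable def psi (m : ℤ) (x : ℝ) : ℝ :=
  Complex.reCLM (HH m (x : ℂ) * Complex.conjCLE (HH m (x : ℂ)))

lemma psi_eq (m : ℤ) (x : ℝ) : psi m x = ‖HH m (x : ℂ)‖ ^ 2 := by
  unfold psi
  simp [Complex.conjCLE_apply, Complex.mul_conj, Complex.sq_norm]

lemma analyticOnNhd_psi (m : ℤ) : AnalyticOnNhd ℝ (psi m) (Set.Ioo (-(1/8) : ℝ) (1/8)) := by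
  intro x hx
  have hmem : (x : ℂ) ∈ ball (0 : ℂ) (1 / 8) := by
    rw [mem_ball, dist_eq_norm, sub_zero, Complex.norm_real, Real.norm_eq_abs, abs_lt]
    exact ⟨by linarith [hx.1], by linarith [hx.2]⟩
  have hA : AnalyticAt ℂ (HH m) (x : ℂ) := analyticOnNhd_HH m _ hmem
  have h1 : AnalyticAt ℝ (HH m) (x : ℂ) := hA.restrictScalars
  have h2 : AnalyticAt ℝ (fun y : ℝ => (y : ℂ)) x := Complex.ofRealCLM.analyticAt x
  have h3 : AnalyticAt ℝ (fun y : ℝ => HH m (y : ℂ)) x := h1.comp h2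
  have h4 : AnalyticAt ℝ (fun y : ℝ => Complex.conjCLE (HH m (y : ℂ))) x :=
    (Complex.conjCLE.toContinuousLinearMap.analyticAt _).comp h3
  have h5 : AnalyticAt ℝ (fun y : ℝ => HH m (y : ℂ) * Complex.conjCLE (HH m (y : ℂ))) x :=
    h3.mul h4
  exact (Complex.reCLM.analyticAt _).comp h5

lemma cCoef_eq (m : ℤ) (x : ℝ) : cCoef m x = (1 / (2 * Real.pi)) • HH m (x : ℂ) := by
  unfold cCoef HH
  congr 1
  apply intervalIntegral.integral_congr
  intro t _
  show hFun x t * _ = P m (x : ℂ) t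
  unfold hFun P
  rw [fFun_eq, gFun_eq]

lemma abs_cCoef_eq (m : ℤ) (x : ℝ) :
    ‖cCoef m x‖ = (1 / (2 * Real.pi)) * Real.sqrt (psi m x) := by
  have hπ := Real.pi_pos
  rw [cCoef_eq, norm_smul, Real.norm_eq_abs,
    _root_.abs_of_nonneg (by positivity : (0:ℝ) ≤ 1 / (2 * Real.pi))]
  congr 1
  rw [psi_eq, Real.sqrt_sq (norm_nonneg _)]

lemma Ioo_subset_S {δ : ℝ} (hδ' : δ ≤ 1 / 16) :
    Set.Ioo (0:ℝ) δ ⊆ Set.Ioo (-(1/8) : ℝ) (1/8) := by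
  intro y hy
  exact ⟨by linarith [hy.1], by linarith [hy.2]⟩

lemma mono_of_deriv_nonneg (m : ℤ) {δ : ℝ} (hδ' : δ ≤ 1 / 16)
    (hsign : ∀ x ∈ Set.Ioo (0:ℝ) δ, 0 ≤ deriv (psi m) x) :
    MonotoneOn (fun x => ‖cCoef m x‖) (Set.Ioo 0 δ) := by
  have hψ := analyticOnNhd_psi m
  have hsub := Ioo_subset_S hδ'
  have hm : MonotoneOn (psi m) (Set.Ioo 0 δ) := by
    refine monotoneOn_of_deriv_nonneg (convex_Ioo _ _)
      (fun y hy => (hψ y (hsub hy)).continuousAt.continuousWithinAt) ?_ ?_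
    · rw [interior_Ioo]
      exact fun y hy => (hψ y (hsub hy)).differentiableAt.differentiableWithinAt
    · rw [interior_Ioo]; exact hsign
  intro a ha b hb hab
  simp only [abs_cCoef_eq]
  exact mul_le_mul_of_nonneg_left (Real.sqrt_le_sqrt (hm ha hb hab))
    (by positivity)

lemma anti_of_deriv_nonpos (m : ℤ) {δ : ℝ} (hδ' : δ ≤ 1 / 16)
    (hsign : ∀ x ∈ Set.Ioo (0:ℝ) δ, deriv (psi m) x ≤ 0) :
    AntitoneOn (fun x => ‖cCoef m x‖) (Set.Ioo 0 δ) := by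
  have hψ := analyticOnNhd_psi m
  have hsub := Ioo_subset_S hδ'
  have hm : AntitoneOn (psi m) (Set.Ioo 0 δ) := by
    refine antitoneOn_of_deriv_nonpos (convex_Ioo _ _)
      (fun y hy => (hψ y (hsub hy)).continuousAt.continuousWithinAt) ?_ ?_
    · rw [interior_Ioo]
      exact fun y hy => (hψ y (hsub hy)).differentiableAt.differentiableWithinAt
    · rw [interior_Ioo]; exact hsign
  intro a ha b hb hab
  simp only [abs_cCoef_eq]
  exact mul_le_mul_of_nonneg_left (Real.sqrt_le_sqrt (hm ha hb hab))
    (by positivity)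

theorem stmt_12' (m : ℤ) :
    ∃ δ : ℝ, 0 < δ ∧ δ < 1 / 4 ∧
      (MonotoneOn (fun x => ‖cCoef m x‖) (Set.Ioo 0 δ) ∨
        AntitoneOn (fun x => ‖cCoef m x‖) (Set.Ioo 0 δ)) := by
  have hψ := analyticOnNhd_psi m
  have hd : AnalyticOnNhd ℝ (deriv (psi m)) (Set.Ioo (-(1/8) : ℝ) (1/8)) := hψ.deriv
  have h0 : AnalyticAt ℝ (deriv (psi m)) 0 := hd 0 (by constructor <;> norm_num)
  rcases h0.eventually_eq_zero_or_eventually_ne_zero with hcase | hcase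
  · rw [Metric.eventually_nhds_iff] at hcase
    obtain ⟨ε, hεpos, hball⟩ := hcase
    refine ⟨min (ε/2) (1/16), by positivity,
      lt_of_le_of_lt (min_le_right _ _) (by norm_num), Or.inl ?_⟩
    refine mono_of_deriv_nonneg m (min_le_right _ _) ?_
    intro y hy
    have : deriv (psi m) y = 0 := by
      apply hball
      rw [Real.dist_eq, sub_zero, abs_of_pos hy.1]
      exact lt_of_lt_of_le hy.2 ((min_le_left _ _).trans (by linarith))
    rw [this]
  · rw [eventually_nhdsWithin_iff, Metric.eventually_nhds_iff] at hcase
    obtain ⟨ε, hεpos, hball⟩ := hcase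
    set δ : ℝ := min (ε/2) (1/16) with hδdef
    have hδpos : 0 < δ := by positivity
    have hδ16 : δ ≤ 1/16 := min_le_right _ _
    have hne : ∀ y ∈ Set.Ioo (0:ℝ) δ, deriv (psi m) y ≠ 0 := by
      intro y hy
      apply hball
      · rw [Real.dist_eq, sub_zero, abs_of_pos hy.1]
        exact lt_of_lt_of_le hy.2 ((min_le_left _ _).trans (by linarith))
      · simpa using ne_of_gt hy.1
    have hsub := Ioo_subset_S hδ16
    have hcontd : ContinuousOn (deriv (psi m)) (Set.Ioo (0:ℝ) δ) :=
      fun y hy => (hd y (hsub hy)).continuousAt.continuousWithinAt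
    have hx0 : δ / 2 ∈ Set.Ioo (0:ℝ) δ := ⟨by linarith, by linarith⟩
    have hsame : ∀ y ∈ Set.Ioo (0:ℝ) δ,
        (0 < deriv (psi m) (δ/2) → 0 < deriv (psi m) y) ∧
        (deriv (psi m) (δ/2) < 0 → deriv (psi m) y < 0) := by
      intro y hy
      have huIcc : Set.uIcc (δ/2) y ⊆ Set.Ioo (0:ℝ) δ :=
        Set.OrdConnected.uIcc_subset Set.ordConnected_Ioo hx0 hy
      have hivt := intermediate_value_uIcc (hcontd.mono huIcc)
      constructor
      · intro hpos
        rcases (hne y hy).lt_or_gt with hlt | hgt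
        · exfalso
          have h0m : (0:ℝ) ∈ Set.uIcc (deriv (psi m) (δ/2)) (deriv (psi m) y) :=
            Set.mem_uIcc.mpr (Or.inr ⟨le_of_lt hlt, le_of_lt hpos⟩)
          obtain ⟨c, hc, hc0⟩ := hivt h0m
          exact hne c (huIcc hc) hc0
        · exact hgt
      · intro hneg
        rcases (hne y hy).lt_or_gt with hlt | hgt
        · exact hlt
        · exfalso
          have h0m : (0:ℝ) ∈ Set.uIcc (deriv (psi m) (δ/2)) (deriv (psi m) y) :=
            Set.mem_uIcc.mpr (Or.inl ⟨le_of_lt hneg, le_of_lt hgt⟩)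
          obtain ⟨c, hc, hc0⟩ := hivt h0m
          exact hne c (huIcc hc) hc0
    refine ⟨δ, hδpos, lt_of_le_of_lt hδ16 (by norm_num), ?_⟩
    rcases (hne _ hx0).lt_or_gt with hneg | hpos
    · exact Or.inr (anti_of_deriv_nonpos m hδ16
        (fun y hy => le_of_lt ((hsame y hy).2 hneg)))
    · exact Or.inl (mono_of_deriv_nonneg m hδ16
        (fun y hy => le_of_lt ((hsame y hy).1 hpos)))

end Stmt12Aux

/-- Lemma 22: for every `m ≠ 0` the function `x ↦ |c_m(x)|` is monotone on some
interval `(0, δ)` with `0 < δ < 1/4`. -/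
theorem stmt_12 (m : ℤ) (hm : m ≠ 0) :
    ∃ δ : ℝ, 0 < δ ∧ δ < 1 / 4 ∧
      (MonotoneOn (fun x => ‖cCoef m x‖) (Set.Ioo 0 δ) ∨
        AntitoneOn (fun x => ‖cCoef m x‖) (Set.Ioo 0 δ)) :=
  Stmt12Aux.stmt_12' m
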